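/- arXiv:2202.11914 — 2 statements merged into one kernel-verified Lean document; each statement's English description precedes it below -/
import Mathlib

section
/- Let H be a real Hilbert space with inner products a(·,·) (norm ‖·‖ₐ) and (·,·) (norm ‖·‖₀), û ∈ H with ‖û‖ₐ = 1 satisfying a(û,v) = λ̂(û,v) for all v ∈ H (λ̂ > 0), and let E be the a-orthogonal projection onto span{û}. Then for any u ∈ H with ‖u‖ₐ = 1, a(u,û) ≥ 0 and (u,u) > 0: 0 ≤ a(u,u)/(u,u) − λ̂ ≤ 4‖u − Eu‖ₐ²/‖u‖₀² provided λ̂ is the smallest eigenvalue in the sense that a(v,v) ≥ λ̂(v,v) for all v ∈ H. -/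
/-!
The inner product of `H` is `a(·,·)` and `b` is `(·,·)`. Since `û` is an eigenvector, the quadratic
form `a(v,v) - λ̂ (v,v)` is unchanged when `û` is subtracted from `v`. Hence
`a(u,u) - λ̂ (u,u) = ‖u - û‖ₐ² - λ̂ ‖u - û‖₀² ≤ ‖u - û‖ₐ²`, and for unit vectors at an acute angle
`‖u - û‖ₐ ≤ 2 ‖u - Eu‖ₐ`. Dividing by `(u,u)` gives the upper bound; the lower bound is the min-max
characterisation of `λ̂`.
-/

section

variable {H : Type*} [NormedAddCommGroup H] [InnerProductSpace ℝ H]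

theorem norm_sq_sub_mul_apply_self_sub_eigenvector (b : H →ₗ[ℝ] H →ₗ[ℝ] ℝ)
    (hb_symm : ∀ u v, b u v = b v u) {lam : ℝ} {uh : H}
    (heig : ∀ v : H, inner ℝ uh v = lam * b uh v) (u : H) :
    ‖u - uh‖ ^ 2 - lam * b (u - uh) (u - uh) = ‖u‖ ^ 2 - lam * b u u := by
  have h_uh_u := heig u
  have h_uh_uh := heig uh
  rw [real_inner_comm] at h_uh_u
  rw [real_inner_self_eq_norm_sq] at h_uh_uh
  simp only [map_sub, LinearMap.sub_apply, norm_sub_sq_real, hb_symm u uh]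
  linear_combination -2 * h_uh_u + h_uh_uh

theorem norm_sub_le_two_mul_norm_sub_inner_smul {u uh : H} (hu : ‖u‖ = 1) (huh : ‖uh‖ = 1)
    (hpos : 0 ≤ inner ℝ u uh) :
    ‖u - uh‖ ≤ 2 * ‖u - inner ℝ u uh • uh‖ := by
  set c : ℝ := inner ℝ u uh
  have hc : c ≤ 1 := by simpa [hu, huh] using real_inner_le_norm u uh
  have h_dist : ‖u - uh‖ ^ 2 = 2 - 2 * c := by
    rw [norm_sub_sq_real, hu, huh]; ring
  have h_perp : ‖u - c • uh‖ ^ 2 = 1 - c ^ 2 := by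
    rw [norm_sub_sq_real, real_inner_smul_right, norm_smul, Real.norm_eq_abs, mul_pow, sq_abs,
      hu, huh]
    ring
  refine le_of_sq_le_sq ?_ (by positivity)
  rw [mul_pow, h_dist, h_perp]
  nlinarith [mul_nonneg (sub_nonneg.2 hc) hpos]

end

theorem stmt_16_general {H : Type*} [NormedAddCommGroup H] [InnerProductSpace ℝ H]
    (b : H →ₗ[ℝ] H →ₗ[ℝ] ℝ) (hb_symm : ∀ u v, b u v = b v u)
    (hb_nonneg : ∀ v, 0 ≤ b v v)
    (lamh : ℝ) (hlamh : 0 < lamh)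
    (uh : H) (huh : ‖uh‖ = 1)
    (heig : ∀ v : H, (inner ℝ uh v : ℝ) = lamh * b uh v)
    (hminmax : ∀ v : H, lamh * b v v ≤ (inner ℝ v v : ℝ))
    (u : H) (hu : ‖u‖ = 1) (hpos : (0 : ℝ) ≤ inner ℝ u uh) (hbu : 0 < b u u) :
    0 ≤ (inner ℝ u u : ℝ) / b u u - lamh ∧
      (inner ℝ u u : ℝ) / b u u - lamh ≤ 4 * ‖u - (inner ℝ u uh : ℝ) • uh‖ ^ 2 / b u u := by
  have h_quot : (inner ℝ u u : ℝ) / b u u - lamh = (‖u‖ ^ 2 - lamh * b u u) / b u u := by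
    rw [real_inner_self_eq_norm_sq]; field_simp
  rw [h_quot]
  refine ⟨div_nonneg (by simpa [real_inner_self_eq_norm_sq] using hminmax u) hbu.le, ?_⟩
  gcongr
  calc ‖u‖ ^ 2 - lamh * b u u
      = ‖u - uh‖ ^ 2 - lamh * b (u - uh) (u - uh) :=
        (norm_sq_sub_mul_apply_self_sub_eigenvector b hb_symm heig u).symm
    _ ≤ ‖u - uh‖ ^ 2 := sub_le_self _ (mul_nonneg hlamh.le (hb_nonneg _))
    _ ≤ (2 * ‖u - (inner ℝ u uh : ℝ) • uh‖) ^ 2 := by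
        gcongr; exact norm_sub_le_two_mul_norm_sub_inner_smul hu huh hpos
    _ = 4 * ‖u - (inner ℝ u uh : ℝ) • uh‖ ^ 2 := by ring

theorem stmt_16 {H : Type*} [NormedAddCommGroup H] [InnerProductSpace ℝ H] [CompleteSpace H]
    (b : H →ₗ[ℝ] H →ₗ[ℝ] ℝ) (hb_symm : ∀ u v, b u v = b v u)
    (hb_nonneg : ∀ v, 0 ≤ b v v)
    (lamh : ℝ) (hlamh : 0 < lamh)
    (uh : H) (huh : ‖uh‖ = 1)
    (heig : ∀ v : H, (inner ℝ uh v : ℝ) = lamh * b uh v)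
    (hminmax : ∀ v : H, lamh * b v v ≤ (inner ℝ v v : ℝ))
    (u : H) (hu : ‖u‖ = 1) (hpos : (0 : ℝ) ≤ inner ℝ u uh) (hbu : 0 < b u u) :
    0 ≤ (inner ℝ u u : ℝ) / b u u - lamh ∧
      (inner ℝ u u : ℝ) / b u u - lamh ≤ 4 * ‖u - (inner ℝ u uh : ℝ) • uh‖ ^ 2 / b u u :=
  stmt_16_general b hb_symm hb_nonneg lamh hlamh uh huh heig hminmax u hu hpos hbu
end

section
/- Let C#, C_M, γ, C_low, C_up > 0, s > 0, 0 < α < 1, and let (e_k) be positive reals with e_{k} ≤ α^{2(k−i)} e_i for all i ≤ k. Suppose nonnegative integers m_i satisfy m_i ≤ C_M e_i^{−1/(2s)} and N_k ≤ C# Σ_{i=1}^{k−1} m_i. Then N_k ≤ C# C_M (α^{1/s}/(1 − α^{1/s})) e_k^{−1/(2s)}, i.e. e_k ≤ (C# C_M α^{1/s}/(1 − α^{1/s}))^{2s} N_k^{−2s}. -/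
/-!
Contraction by `α²` per step gives `e i ^ (-1/(2s)) ≤ β ^ (k - i) * e k ^ (-1/(2s))` for `i ≤ k`,
where `β = α ^ (1/s) < 1`. So each `m i` with `i < k` is at most `C_M * e k ^ (-1/(2s))` times
`β ^ (k - i)`, and the geometric tail `∑_{i=1}^{k-1} β ^ (k - i) ≤ β / (1 - β)` bounds `N k`.
-/

open Finset

theorem sum_Ico_one_pow_sub_le {β : ℝ} (hβ0 : 0 ≤ β) (hβ1 : β < 1) (k : ℕ) :
    ∑ i ∈ Ico 1 k, β ^ (k - i) ≤ β / (1 - β) := by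
  rw [sum_Ico_reflect (β ^ ·) 1 k.le_succ, Nat.add_sub_cancel, Nat.add_sub_cancel_left]
  simpa using geom_sum_Ico_le_of_lt_one (m := 1) (n := k) hβ0 hβ1

theorem sum_Ico_one_le_of_le_mul_pow {b : ℕ → ℝ} {K β : ℝ} (hK : 0 ≤ K) (hβ0 : 0 ≤ β)
    (hβ1 : β < 1) {k : ℕ} (hb : ∀ i ∈ Ico 1 k, b i ≤ K * β ^ (k - i)) :
    ∑ i ∈ Ico 1 k, b i ≤ K * (β / (1 - β)) :=
  calc ∑ i ∈ Ico 1 k, b i ≤ ∑ i ∈ Ico 1 k, K * β ^ (k - i) := sum_le_sum hb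
    _ = K * ∑ i ∈ Ico 1 k, β ^ (k - i) := (mul_sum _ _ _).symm
    _ ≤ K * (β / (1 - β)) := by gcongr; exact sum_Ico_one_pow_sub_le hβ0 hβ1 k

theorem Real.rpow_neg_le_pow_mul_of_le_pow_mul {a x y t : ℝ} (ha : 0 < a) (hx : 0 < x)
    (hy : 0 < y) (ht : 0 ≤ t) {n : ℕ} (h : y ≤ a ^ n * x) :
    x ^ (-t) ≤ (a ^ t) ^ n * y ^ (-t) := by
  have han : 0 < a ^ n := pow_pos ha n
  have hmono : (a ^ n) ^ (-t) * x ^ (-t) ≤ y ^ (-t) := by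
    rw [← Real.mul_rpow han.le hx.le]
    exact Real.rpow_le_rpow_of_nonpos hy h (neg_nonpos.mpr ht)
  calc x ^ (-t) = (a ^ n) ^ t * ((a ^ n) ^ (-t) * x ^ (-t)) := by
        rw [Real.rpow_neg han.le, ← mul_assoc, mul_inv_cancel₀ (by positivity), one_mul]
    _ ≤ (a ^ n) ^ t * y ^ (-t) := by gcongr
    _ = (a ^ t) ^ n * y ^ (-t) := by rw [Real.rpow_pow_comm ha.le]

theorem stmt_17_general (Csharp C_M s α : ℝ)
    (hCsharp : 0 < Csharp) (hCM : 0 < C_M) (hs : 0 < s) (hα0 : 0 < α) (hα1 : α < 1)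
    (e : ℕ → ℝ) (hepos : ∀ i, 0 < e i)
    (hcontr : ∀ i k, i ≤ k → e k ≤ α ^ (2 * (k - i)) * e i)
    (m : ℕ → ℕ) (hm : ∀ i, (m i : ℝ) ≤ C_M * (e i) ^ (-(1 / (2 * s))))
    (N : ℕ → ℕ) (hN : ∀ k, (N k : ℝ) ≤ Csharp * ∑ i ∈ Finset.Ico 1 k, (m i : ℝ)) :
    ∀ k, (N k : ℝ) ≤ Csharp * C_M * (α ^ (1 / s) / (1 - α ^ (1 / s))) *
      (e k) ^ (-(1 / (2 * s))) := by
  intro k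
  have hβ0 : 0 ≤ α ^ (1 / s) := Real.rpow_nonneg hα0.le _
  have hβ1 : α ^ (1 / s) < 1 := Real.rpow_lt_one hα0.le hα1 (by positivity)
  have hβ : (α ^ 2) ^ (1 / (2 * s)) = α ^ (1 / s) := by
    rw [← Real.rpow_natCast, ← Real.rpow_mul hα0.le]
    congr 1
    push_cast
    field_simp
  have hterm : ∀ i ∈ Ico 1 k,
      (m i : ℝ) ≤ C_M * e k ^ (-(1 / (2 * s))) * (α ^ (1 / s)) ^ (k - i) := fun i hi ↦ by
    have hdecay := Real.rpow_neg_le_pow_mul_of_le_pow_mul (pow_pos hα0 2) (hepos i) (hepos k)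
      (by positivity : 0 ≤ 1 / (2 * s))
      (by simpa [← pow_mul] using hcontr i k (mem_Ico.mp hi).2.le)
    rw [hβ] at hdecay
    calc (m i : ℝ) ≤ C_M * e i ^ (-(1 / (2 * s))) := hm i
      _ ≤ C_M * ((α ^ (1 / s)) ^ (k - i) * e k ^ (-(1 / (2 * s)))) := by gcongr
      _ = C_M * e k ^ (-(1 / (2 * s))) * (α ^ (1 / s)) ^ (k - i) := by ring
  calc (N k : ℝ) ≤ Csharp * ∑ i ∈ Ico 1 k, (m i : ℝ) := hN k
    _ ≤ Csharp * (C_M * e k ^ (-(1 / (2 * s))) * (α ^ (1 / s) / (1 - α ^ (1 / s)))) := by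
        gcongr
        exact sum_Ico_one_le_of_le_mul_pow (by have := hepos k; positivity) hβ0 hβ1 hterm
    _ = _ := by ring

theorem stmt_17 (Csharp C_M γ C_low C_up s α : ℝ)
    (hCsharp : 0 < Csharp) (hCM : 0 < C_M) (hγ : 0 < γ) (hClow : 0 < C_low)
    (hCup : 0 < C_up) (hs : 0 < s) (hα0 : 0 < α) (hα1 : α < 1)
    (e : ℕ → ℝ) (hepos : ∀ i, 0 < e i)
    (hcontr : ∀ i k, i ≤ k → e k ≤ α ^ (2 * (k - i)) * e i)
    (m : ℕ → ℕ) (hm : ∀ i, (m i : ℝ) ≤ C_M * (e i) ^ (-(1 / (2 * s))))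
    (N : ℕ → ℕ) (hN : ∀ k, (N k : ℝ) ≤ Csharp * ∑ i ∈ Finset.Ico 1 k, (m i : ℝ)) :
    ∀ k, (N k : ℝ) ≤ Csharp * C_M * (α ^ (1 / s) / (1 - α ^ (1 / s))) *
      (e k) ^ (-(1 / (2 * s))) :=
  stmt_17_general Csharp C_M s α hCsharp hCM hs hα0 hα1 e hepos hcontr m hm N hN
end
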